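/- Let t ≥ s ≥ p ≥ 1 be real numbers, A, B invertible n×n complex matrices and Q an n×n Hermitian positive definite matrix. If Y is a Hermitian positive definite matrix with Y^(s/t) + A*Y⁻¹A + B*Y^(−p/t)B = Q, then m₁ I ≤ Y ≤ N₁, where N₁ = (λ₁(Q)/λₙ(Q))^(t/s − 1) Q^(t/s) and m₁ = max{λₙ(AQ⁻¹A*), (λₙ(BQ⁻¹B*)/λ₁(BQ⁻¹B*))^(t/p − 1) λₙ(BQ⁻¹B*)^(t/p)}. -/

import Mathlib

open Matrix Filter
open scoped ComplexOrder

/-- Real power of a Hermitian matrix, via the spectral decomposition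
(junk value `X` if `X` is not Hermitian). -/
noncomputable def hrpow {n : ℕ} (X : Matrix (Fin n) (Fin n) ℂ) (r : ℝ) :
    Matrix (Fin n) (Fin n) ℂ :=
  if hX : X.IsHermitian then
    (hX.eigenvectorUnitary : Matrix (Fin n) (Fin n) ℂ) *
      Matrix.diagonal (fun i => ((hX.eigenvalues i ^ r : ℝ) : ℂ)) *
      (hX.eigenvectorUnitary : Matrix (Fin n) (Fin n) ℂ)ᴴ
  else X

/-- Largest eigenvalue of a Hermitian matrix (junk value `0` otherwise). -/
noncomputable def lamMax {n : ℕ} (X : Matrix (Fin n) (Fin n) ℂ) : ℝ :=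
  if hX : X.IsHermitian then ⨆ i, hX.eigenvalues i else 0

/-- Smallest eigenvalue of a Hermitian matrix (junk value `0` otherwise). -/
noncomputable def lamMin {n : ℕ} (X : Matrix (Fin n) (Fin n) ℂ) : ℝ :=
  if hX : X.IsHermitian then ⨅ i, hX.eigenvalues i else 0

/-- The spectral (ℓ²-operator) norm of a complex matrix. -/
noncomputable def specNorm {n : ℕ} (A : Matrix (Fin n) (Fin n) ℂ) : ℝ :=
  ‖Matrix.toEuclideanCLM (𝕜 := ℂ) A‖

/-- The spectral radius of a complex matrix. -/
noncomputable def specRad {n : ℕ} (A : Matrix (Fin n) (Fin n) ℂ) : ℝ :=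
  (spectralRadius ℂ A).toReal

/-- The Loewner order: `lle X Y` iff `Y - X` is positive semidefinite. -/
def lle {n : ℕ} (X Y : Matrix (Fin n) (Fin n) ℂ) : Prop := (Y - X).PosSemidef


namespace Hlp
variable {n : ℕ}

def cdiag (f : Fin n → ℝ) : Matrix (Fin n) (Fin n) ℂ :=
  Matrix.diagonal (fun i => (f i : ℂ))

lemma cdiag_sub (f g : Fin n → ℝ) : cdiag f - cdiag g = cdiag (f - g) := by
  simp [cdiag, ← Matrix.diagonal_sub]

lemma cdiag_mul (f g : Fin n → ℝ) : cdiag f * cdiag g = cdiag (f * g) := by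
  simp [cdiag, Matrix.diagonal_mul_diagonal]

lemma cdiag_smul (c : ℝ) (f : Fin n → ℝ) : c • cdiag f = cdiag (c • f) := by
  ext i j
  by_cases h : i = j <;> simp [cdiag, Matrix.diagonal, h, Complex.real_smul]

lemma cdiag_one : cdiag (1 : Fin n → ℝ) = 1 := by
  simp [cdiag, Matrix.diagonal_one]

lemma cdiag_psd_iff (f : Fin n → ℝ) : (cdiag f).PosSemidef ↔ ∀ i, 0 ≤ f i := by
  rw [cdiag, Matrix.posSemidef_diagonal_iff]
  constructor <;> intro h i <;> have := h i <;> simpa [Complex.zero_le_real] using this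

variable {X : Matrix (Fin n) (Fin n) ℂ} (hX : X.IsHermitian)

noncomputable def U (hX : X.IsHermitian) : Matrix (Fin n) (Fin n) ℂ :=
  (hX.eigenvectorUnitary : Matrix (Fin n) (Fin n) ℂ)

lemma U_mul_star : U hX * (U hX)ᴴ = 1 := by
  have := (Matrix.mem_unitaryGroup_iff).mp (hX.eigenvectorUnitary).2
  simpa [U, Matrix.star_eq_conjTranspose] using this

lemma star_mul_U : (U hX)ᴴ * U hX = 1 := by
  have := (Matrix.mem_unitaryGroup_iff').mp (hX.eigenvectorUnitary).2
  simpa [U, Matrix.star_eq_conjTranspose] using this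

noncomputable def rep (hX : X.IsHermitian) (f : Fin n → ℝ) : Matrix (Fin n) (Fin n) ℂ :=
  U hX * cdiag f * (U hX)ᴴ

lemma rep_self : rep hX hX.eigenvalues = X := by
  have := hX.spectral_theorem
  rw [rep, cdiag, U]
  rw [Unitary.conjStarAlgAut_apply, Matrix.star_eq_conjTranspose] at this
  exact this.symm

lemma rep_sub (f g : Fin n → ℝ) : rep hX f - rep hX g = rep hX (f - g) := by
  rw [rep, rep, rep, ← cdiag_sub, Matrix.mul_sub, Matrix.sub_mul]

lemma rep_smul (c : ℝ) (f : Fin n → ℝ) : c • rep hX f = rep hX (c • f) := by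
  rw [rep, rep, ← cdiag_smul]
  simp only [Matrix.mul_assoc, mul_smul_comm, smul_mul_assoc]

lemma rep_mul (f g : Fin n → ℝ) : rep hX f * rep hX g = rep hX (f * g) := by
  rw [rep, rep, rep, ← cdiag_mul]
  calc U hX * cdiag f * (U hX)ᴴ * (U hX * cdiag g * (U hX)ᴴ)
      = U hX * cdiag f * ((U hX)ᴴ * U hX) * cdiag g * (U hX)ᴴ := by
        simp only [Matrix.mul_assoc]
    _ = U hX * (cdiag f * cdiag g) * (U hX)ᴴ := by
        rw [star_mul_U]; simp only [Matrix.mul_one, Matrix.mul_assoc]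

lemma rep_one : rep hX 1 = 1 := by
  rw [rep, cdiag_one, Matrix.mul_one, U_mul_star]

lemma rep_psd_iff (f : Fin n → ℝ) : (rep hX f).PosSemidef ↔ ∀ i, 0 ≤ f i := by
  rw [← cdiag_psd_iff]
  constructor
  · intro h
    have h2 := h.conjTranspose_mul_mul_same (U hX)
    have : (U hX)ᴴ * rep hX f * U hX = cdiag f := by
      rw [rep]
      calc (U hX)ᴴ * (U hX * cdiag f * (U hX)ᴴ) * U hX
          = ((U hX)ᴴ * U hX) * cdiag f * ((U hX)ᴴ * U hX) := by simp only [Matrix.mul_assoc]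
        _ = cdiag f := by rw [star_mul_U]; simp
    rwa [this] at h2
  · intro h
    have := h.mul_mul_conjTranspose_same (U hX)
    simpa [rep] using this

lemma hrpow_eq (r : ℝ) : hrpow X r = rep hX (fun i => hX.eigenvalues i ^ r) := by
  rw [hrpow, dif_pos hX]; rfl


-- `lle M N` unfolds to `(N - M).PosSemidef`; work with that directly.

lemma psd_smul {M : Matrix (Fin n) (Fin n) ℂ} (hM : M.PosSemidef) {c : ℝ} (hc : 0 ≤ c) :
    (c • M).PosSemidef := by
  rw [Matrix.posSemidef_iff_dotProduct_mulVec]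
  constructor
  · unfold Matrix.IsHermitian
    rw [Matrix.conjTranspose_smul, hM.1, star_trivial]
  · intro x
    rw [Matrix.smul_mulVec, dotProduct_smul]
    exact smul_nonneg (by exact_mod_cast hc) ((Matrix.posSemidef_iff_dotProduct_mulVec.mp hM).2 x)

lemma psd_conj {M : Matrix (Fin n) (Fin n) ℂ} (hM : M.PosSemidef)
    (C : Matrix (Fin n) (Fin n) ℂ) : (Cᴴ * M * C).PosSemidef :=
  hM.conjTranspose_mul_mul_same C

lemma posDef_conj {M B : Matrix (Fin n) (Fin n) ℂ} (hM : M.PosDef) (hB : IsUnit B) :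
    (Bᴴ * M * B).PosDef := by
  refine Matrix.PosDef.of_dotProduct_mulVec_pos (Matrix.isHermitian_conjTranspose_mul_mul B hM.1) fun x hx => ?_
  have hinj : Function.Injective (B.mulVec) := Matrix.mulVec_injective_iff_isUnit.mpr hB
  have hBx : B *ᵥ x ≠ 0 := by
    intro h0
    exact hx (hinj (by simpa using h0))
  have := hM.dotProduct_mulVec_pos hBx
  simpa only [Matrix.star_mulVec, Matrix.dotProduct_mulVec, Matrix.vecMul_vecMul] using this

variable {X : Matrix (Fin n) (Fin n) ℂ} (hX : X.IsHermitian)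

lemma U_isUnit : IsUnit (U hX) :=
  ⟨⟨U hX, (U hX)ᴴ, U_mul_star hX, star_mul_U hX⟩, rfl⟩

lemma rep_posDef {f : Fin n → ℝ} (hf : ∀ i, 0 < f i) : (rep hX f).PosDef := by
  have hd : (cdiag f : Matrix (Fin n) (Fin n) ℂ).PosDef := by
    rw [cdiag]
    exact Matrix.PosDef.diagonal (fun i => by
      simpa using (Complex.zero_lt_real (x := f i)).mpr (hf i))
  have := posDef_conj hd (hB := (U_isUnit hX).star)
  simpa [rep, Matrix.star_eq_conjTranspose] using this

lemma lamMax_eq : lamMax X = ⨆ i, hX.eigenvalues i := by rw [lamMax, dif_pos hX]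

lemma lamMin_eq : lamMin X = ⨅ i, hX.eigenvalues i := by rw [lamMin, dif_pos hX]

lemma rep_le_smul_one {f : Fin n → ℝ} {c : ℝ} (h : ∀ i, f i ≤ c) :
    (c • (1 : Matrix (Fin n) (Fin n) ℂ) - rep hX f).PosSemidef := by
  rw [← rep_one hX, rep_smul, rep_sub]
  exact (rep_psd_iff hX _).mpr fun i => by simpa using sub_nonneg.mpr (h i)

lemma smul_one_le_rep {f : Fin n → ℝ} {c : ℝ} (h : ∀ i, c ≤ f i) :
    (rep hX f - c • (1 : Matrix (Fin n) (Fin n) ℂ)).PosSemidef := by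
  rw [← rep_one hX, rep_smul, rep_sub]
  exact (rep_psd_iff hX _).mpr fun i => by simpa using sub_nonneg.mpr (h i)

lemma extract_le {f : Fin n → ℝ} {c : ℝ}
    (h : (c • (1 : Matrix (Fin n) (Fin n) ℂ) - rep hX f).PosSemidef) : ∀ i, f i ≤ c := by
  rw [← rep_one hX, rep_smul, rep_sub] at h
  intro i
  have := (rep_psd_iff hX _).mp h i
  simpa [sub_nonneg] using this

lemma extract_ge {f : Fin n → ℝ} {c : ℝ}
    (h : (rep hX f - c • (1 : Matrix (Fin n) (Fin n) ℂ)).PosSemidef) : ∀ i, c ≤ f i := by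
  rw [← rep_one hX, rep_smul, rep_sub] at h
  intro i
  have := (rep_psd_iff hX _).mp h i
  simpa [sub_nonneg] using this

lemma le_lamMax {X : Matrix (Fin n) (Fin n) ℂ} (hX : X.IsHermitian) :
    (lamMax X • (1 : Matrix (Fin n) (Fin n) ℂ) - X).PosSemidef := by
  nth_rewrite 2 [← rep_self hX]
  exact rep_le_smul_one hX fun i => by
    rw [lamMax_eq hX]; exact le_ciSup (Set.Finite.bddAbove (Set.finite_range _)) i

lemma lamMin_le {X : Matrix (Fin n) (Fin n) ℂ} (hX : X.IsHermitian) :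
    (X - lamMin X • (1 : Matrix (Fin n) (Fin n) ℂ)).PosSemidef := by
  nth_rewrite 1 [← rep_self hX]
  exact smul_one_le_rep hX fun i => by
    rw [lamMin_eq hX]; exact ciInf_le (Set.Finite.bddBelow (Set.finite_range _)) i


lemma rep_sub_self {X : Matrix (Fin n) (Fin n) ℂ} (hX : X.IsHermitian) (f : Fin n → ℝ) :
    rep hX f - X = rep hX (f - hX.eigenvalues) := by
  rw [← rep_sub, rep_self]

lemma self_sub_rep {X : Matrix (Fin n) (Fin n) ℂ} (hX : X.IsHermitian) (f : Fin n → ℝ) :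
    X - rep hX f = rep hX (hX.eigenvalues - f) := by
  rw [← rep_sub, rep_self]

lemma smul_as_rep {X : Matrix (Fin n) (Fin n) ℂ} (hX : X.IsHermitian) (b : ℝ) :
    b • X = rep hX (b • hX.eigenvalues) := by
  rw [← rep_smul]; exact congrArg (b • ·) (rep_self hX).symm

lemma rep_inv {X : Matrix (Fin n) (Fin n) ℂ} (hX : X.IsHermitian) {f g : Fin n → ℝ}
    (hfg : ∀ i, f i * g i = 1) : (rep hX f)⁻¹ = rep hX g := by
  apply Matrix.inv_eq_right_inv
  rw [rep_mul]
  rw [show f * g = 1 from funext fun i => hfg i, rep_one]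

lemma posDef_inv_rep {M : Matrix (Fin n) (Fin n) ℂ} (hM : M.PosDef) :
    M⁻¹ = rep hM.1 (fun i => (hM.1.eigenvalues i)⁻¹) := by
  apply Matrix.inv_eq_right_inv
  have h1 : M * rep hM.1 (fun i => (hM.1.eigenvalues i)⁻¹)
      = rep hM.1 hM.1.eigenvalues * rep hM.1 (fun i => (hM.1.eigenvalues i)⁻¹) :=
    congrArg (· * _) (rep_self hM.1).symm
  rw [h1, rep_mul, show (hM.1.eigenvalues * fun i => (hM.1.eigenvalues i)⁻¹) = 1 from
    funext fun i => mul_inv_cancel₀ (hM.eigenvalues_pos i).ne', rep_one]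

lemma inv_antitone {M N : Matrix (Fin n) (Fin n) ℂ} (hM : M.PosDef) (hN : N.PosDef)
    (h : (N - M).PosSemidef) : (M⁻¹ - N⁻¹).PosSemidef := by
  have hμ : ∀ i, 0 < hM.1.eigenvalues i := hM.eigenvalues_pos
  set μ := hM.1.eigenvalues with hμdef
  set S : Matrix (Fin n) (Fin n) ℂ := rep hM.1 (fun i => μ i ^ (-(1/2) : ℝ)) with hS
  set T : Matrix (Fin n) (Fin n) ℂ := rep hM.1 (fun i => μ i ^ ((1/2) : ℝ)) with hT
  have hMrep : M = rep hM.1 μ := (rep_self hM.1).symm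
  have hSpd : S.PosDef := rep_posDef hM.1 fun i => Real.rpow_pos_of_pos (hμ i) _
  have hSH : Sᴴ = S := hSpd.1
  have hST : S * T = 1 := by
    rw [hS, hT, rep_mul]
    rw [show ((fun i => μ i ^ (-(1/2):ℝ)) * (fun i => μ i ^ ((1/2):ℝ))) = 1 from
      funext fun i => by
        simp only [Pi.mul_apply, Pi.one_apply, ← Real.rpow_add (hμ i)]
        norm_num, rep_one]
  have hTS : T * S = 1 := by
    rw [hS, hT, rep_mul]
    rw [show ((fun i => μ i ^ ((1/2):ℝ)) * (fun i => μ i ^ (-(1/2):ℝ))) = 1 from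
      funext fun i => by
        simp only [Pi.mul_apply, Pi.one_apply, ← Real.rpow_add (hμ i)]
        norm_num, rep_one]
  have hSinv : S⁻¹ = T := Matrix.inv_eq_right_inv hST
  have hSMS : S * M * S = 1 := by
    rw [hS]
    refine Eq.trans (congrArg (fun Z => rep hM.1 (fun i => μ i ^ (-(1/2):ℝ)) * Z *
      rep hM.1 (fun i => μ i ^ (-(1/2):ℝ))) hMrep) ?_
    rw [rep_mul, rep_mul]
    rw [show ((fun i => μ i ^ (-(1/2):ℝ)) * μ * (fun i => μ i ^ (-(1/2):ℝ))) = 1 from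
      funext fun i => by
        simp only [Pi.mul_apply, Pi.one_apply]
        calc μ i ^ (-(1/2):ℝ) * μ i * μ i ^ (-(1/2):ℝ)
            = μ i * (μ i ^ (-(1/2):ℝ) * μ i ^ (-(1/2):ℝ)) := by ring
          _ = μ i * (μ i)⁻¹ := by
              rw [← Real.rpow_add (hμ i),
                show (-(1/2) + -(1/2) : ℝ) = -1 by norm_num, Real.rpow_neg_one]
          _ = 1 := mul_inv_cancel₀ (hμ i).ne', rep_one]
  have hMinv : M⁻¹ = S * S := by
    rw [hS, rep_mul, posDef_inv_rep hM]
    refine congrArg (rep hM.1) (funext fun i => ?_)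
    simp only [Pi.mul_apply]
    rw [← Real.rpow_add (hμ i)]
    rw [show (-(1/2) + -(1/2) : ℝ) = -1 by norm_num, Real.rpow_neg_one]
  set P : Matrix (Fin n) (Fin n) ℂ := S * N * S with hPdef
  have hPpd : P.PosDef := by
    have := posDef_conj hN hSpd.isUnit
    rwa [hSH] at this
  have h1P : (P - 1).PosSemidef := by
    have h2 := psd_conj h S
    rw [hSH] at h2
    have e : S * (N - M) * S = P - 1 := by
      rw [Matrix.mul_sub, Matrix.sub_mul, hSMS, hPdef]
    rwa [e] at h2
  have he1 : ∀ i, 1 ≤ hPpd.1.eigenvalues i := by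
    apply extract_ge hPpd.1 (c := 1)
    rw [one_smul, rep_self]
    exact h1P
  have hPinv : P⁻¹ = rep hPpd.1 (fun i => (hPpd.1.eigenvalues i)⁻¹) := posDef_inv_rep hPpd
  have hP1 : ((1 : Matrix (Fin n) (Fin n) ℂ) - P⁻¹).PosSemidef := by
    rw [hPinv, ← rep_one hPpd.1, rep_sub]
    refine (rep_psd_iff hPpd.1 _).mpr fun i => ?_
    simp only [Pi.sub_apply, Pi.one_apply]
    rw [sub_nonneg]
    exact inv_le_one_of_one_le₀ (he1 i)
  have hconj := psd_conj hP1 S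
  rw [hSH] at hconj
  have hNinv : S * P⁻¹ * S = N⁻¹ := by
    have hPinv2 : P⁻¹ = T * (N⁻¹ * T) := by
      rw [hPdef, Matrix.mul_inv_rev, Matrix.mul_inv_rev, hSinv]
    rw [hPinv2]
    calc S * (T * (N⁻¹ * T)) * S = (S * T) * N⁻¹ * (T * S) := by
          simp only [Matrix.mul_assoc]
      _ = N⁻¹ := by rw [hST, hTS, Matrix.one_mul, Matrix.mul_one]
  have e2 : S * (1 - P⁻¹) * S = M⁻¹ - N⁻¹ := by
    rw [Matrix.mul_sub, Matrix.sub_mul, hNinv, Matrix.mul_one, ← hMinv]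
  rwa [e2] at hconj


lemma self_sub_smul_one {X : Matrix (Fin n) (Fin n) ℂ} (hX : X.IsHermitian) (c : ℝ) :
    X - c • (1 : Matrix (Fin n) (Fin n) ℂ) = rep hX (hX.eigenvalues - c • 1) := by
  rw [← rep_one hX, rep_smul, self_sub_rep]

end Hlp

theorem stmt15 {n : ℕ} (hn : 0 < n) (s t p : ℝ) (hp : 1 ≤ p) (hps : p ≤ s) (hst : s ≤ t)
    (A B Q : Matrix (Fin n) (Fin n) ℂ) (hA : IsUnit A) (hB : IsUnit B) (hQ : Q.PosDef)
    (N₁ : Matrix (Fin n) (Fin n) ℂ)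
    (hN₁ : N₁ = ((lamMax Q / lamMin Q) ^ (t / s - 1)) • hrpow Q (t / s))
    (m₁ : ℝ) (hm₁ : m₁ = max (lamMin (A * Q⁻¹ * Aᴴ))
      ((lamMin (B * Q⁻¹ * Bᴴ) / lamMax (B * Q⁻¹ * Bᴴ)) ^ (t / p - 1) *
        lamMin (B * Q⁻¹ * Bᴴ) ^ (t / p)))
    (Y : Matrix (Fin n) (Fin n) ℂ) (hY : Y.PosDef)
    (hsol : hrpow Y (s / t) + Aᴴ * Y⁻¹ * A + Bᴴ * hrpow Y (-(p / t)) * B = Q) :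
    lle (m₁ • (1 : Matrix (Fin n) (Fin n) ℂ)) Y ∧ lle Y N₁ := by
  classical
  haveI : Nonempty (Fin n) := ⟨⟨0, hn⟩⟩
  have hp0 : (0:ℝ) < p := lt_of_lt_of_le one_pos hp
  have hs0 : (0:ℝ) < s := lt_of_lt_of_le hp0 hps
  have ht0 : (0:ℝ) < t := lt_of_lt_of_le hs0 hst
  have hρ : (1:ℝ) ≤ t / s := (one_le_div hs0).mpr hst
  have hτ : (1:ℝ) ≤ t / p := (one_le_div hp0).mpr (le_trans hps hst)
  have hy : ∀ i, 0 < hY.1.eigenvalues i := hY.eigenvalues_pos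
  have hq : ∀ i, 0 < hQ.1.eigenvalues i := hQ.eigenvalues_pos
  have hXrep := Hlp.hrpow_eq hY.1 (s/t)
  have hZrep := Hlp.hrpow_eq hY.1 (-(p/t))
  have hXpsd : (hrpow Y (s/t)).PosSemidef := by
    rw [hXrep]; exact (Hlp.rep_psd_iff hY.1 _).mpr fun i => Real.rpow_nonneg (hy i).le _
  have hZpsd : (hrpow Y (-(p/t))).PosSemidef := by
    rw [hZrep]; exact (Hlp.rep_psd_iff hY.1 _).mpr fun i => Real.rpow_nonneg (hy i).le _
  have hAYA : (Aᴴ * Y⁻¹ * A).PosSemidef := (hY.inv.posSemidef).conjTranspose_mul_mul_same A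
  have hBZB : (Bᴴ * hrpow Y (-(p/t)) * B).PosSemidef := hZpsd.conjTranspose_mul_mul_same B
  have hQX : (Q - hrpow Y (s/t)).PosSemidef := by
    have e : Q - hrpow Y (s/t) = Aᴴ * Y⁻¹ * A + Bᴴ * hrpow Y (-(p/t)) * B := by
      rw [← hsol]; abel
    rw [e]; exact hAYA.add hBZB
  have hcq : ∀ i, hQ.1.eigenvalues i ≤ lamMax Q := fun i => by
    rw [Hlp.lamMax_eq hQ.1]; exact le_ciSup (Set.Finite.bddAbove (Set.finite_range _)) i
  have hdq : ∀ i, lamMin Q ≤ hQ.1.eigenvalues i := fun i => by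
    rw [Hlp.lamMin_eq hQ.1]; exact ciInf_le (Set.Finite.bddBelow (Set.finite_range _)) i
  have hd0 : 0 < lamMin Q := by
    rw [Hlp.lamMin_eq hQ.1]
    obtain ⟨j, hj⟩ := exists_eq_ciInf_of_finite (f := hQ.1.eigenvalues)
    rw [← hj]; exact hq j
  have hc0 : 0 < lamMax Q := lt_of_lt_of_le hd0 (le_trans (hdq ⟨0,hn⟩) (hcq ⟨0,hn⟩))
  -- upper bound
  have hXc : ((lamMax Q) • (1 : Matrix (Fin n) (Fin n) ℂ) - hrpow Y (s/t)).PosSemidef := by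
    have h1 := (Hlp.le_lamMax hQ.1).add hQX
    rwa [sub_add_sub_cancel] at h1
  have hya : ∀ i, hY.1.eigenvalues i ^ (s/t) ≤ lamMax Q := by
    apply Hlp.extract_le hY.1
    rw [← hXrep]
    exact hXc
  have key5 : ((lamMax Q ^ (t/s - 1)) • hrpow Y (s/t) - Y).PosSemidef := by
    rw [hXrep, Hlp.rep_smul, Hlp.rep_sub_self]
    refine (Hlp.rep_psd_iff hY.1 _).mpr fun i => ?_
    simp only [Pi.sub_apply, Pi.smul_apply, smul_eq_mul]
    rw [sub_nonneg]
    have h1 : hY.1.eigenvalues i = (hY.1.eigenvalues i ^ (s/t)) ^ (t/s) := by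
      rw [← Real.rpow_mul (hy i).le]
      rw [show (s/t) * (t/s) = 1 by field_simp, Real.rpow_one]
    have h2 : (hY.1.eigenvalues i ^ (s/t)) ^ (t/s)
        = (hY.1.eigenvalues i ^ (s/t)) ^ (t/s - 1) * (hY.1.eigenvalues i ^ (s/t)) := by
      nth_rewrite 1 [show t/s = (t/s - 1) + 1 by ring]
      rw [Real.rpow_add_one (Real.rpow_pos_of_pos (hy i) _).ne']
    have h3 : (hY.1.eigenvalues i ^ (s/t)) ^ (t/s - 1) ≤ lamMax Q ^ (t/s - 1) :=
      Real.rpow_le_rpow (Real.rpow_nonneg (hy i).le _) (hya i) (by linarith)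
    calc hY.1.eigenvalues i
        = (hY.1.eigenvalues i ^ (s/t)) ^ (t/s - 1) * (hY.1.eigenvalues i ^ (s/t)) := by
          rw [← h2, ← h1]
      _ ≤ lamMax Q ^ (t/s - 1) * hY.1.eigenvalues i ^ (s/t) :=
          mul_le_mul_of_nonneg_right h3 (Real.rpow_nonneg (hy i).le _)
  have key6 : ((lamMax Q ^ (t/s-1)) • Q
      - (lamMax Q ^ (t/s-1)) • hrpow Y (s/t)).PosSemidef := by
    have h1 := Hlp.psd_smul hQX (Real.rpow_nonneg hc0.le (t/s-1))
    rwa [smul_sub] at h1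
  have key7 : (N₁ - (lamMax Q ^ (t/s-1)) • Q).PosSemidef := by
    rw [hN₁, Hlp.hrpow_eq hQ.1, Hlp.rep_smul, Hlp.smul_as_rep hQ.1 (lamMax Q ^ (t/s-1)),
      Hlp.rep_sub]
    refine (Hlp.rep_psd_iff hQ.1 _).mpr fun i => ?_
    simp only [Pi.sub_apply, Pi.smul_apply, smul_eq_mul]
    rw [sub_nonneg]
    have e1 : hQ.1.eigenvalues i ^ (t/s)
        = hQ.1.eigenvalues i ^ (t/s - 1) * hQ.1.eigenvalues i := by
      nth_rewrite 1 [show t/s = (t/s - 1) + 1 by ring]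
      rw [Real.rpow_add_one (hq i).ne']
    have e2 : (lamMax Q / lamMin Q) ^ (t/s-1) * (hQ.1.eigenvalues i ^ (t/s - 1))
        = (lamMax Q / lamMin Q * hQ.1.eigenvalues i) ^ (t/s - 1) := by
      rw [← Real.mul_rpow (div_nonneg hc0.le hd0.le) (hq i).le]
    have e3 : lamMax Q ≤ lamMax Q / lamMin Q * hQ.1.eigenvalues i := by
      rw [div_mul_eq_mul_div, mul_comm, ← div_mul_eq_mul_div]
      nth_rewrite 1 [← one_mul (lamMax Q)]
      exact mul_le_mul_of_nonneg_right ((one_le_div hd0).mpr (hdq i)) hc0.le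
    have e4 : lamMax Q ^ (t/s-1) ≤ (lamMax Q / lamMin Q * hQ.1.eigenvalues i) ^ (t/s-1) :=
      Real.rpow_le_rpow hc0.le e3 (by linarith)
    calc lamMax Q ^ (t/s-1) * hQ.1.eigenvalues i
        ≤ (lamMax Q / lamMin Q * hQ.1.eigenvalues i) ^ (t/s-1) * hQ.1.eigenvalues i :=
          mul_le_mul_of_nonneg_right e4 (hq i).le
      _ = (lamMax Q / lamMin Q) ^ (t/s-1) * (hQ.1.eigenvalues i ^ (t/s - 1))
          * hQ.1.eigenvalues i := by rw [e2]
      _ = (lamMax Q / lamMin Q) ^ (t/s-1) * (hQ.1.eigenvalues i ^ (t/s)) := by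
          rw [e1]; ring
  have hUpper : (N₁ - Y).PosSemidef := by
    have h1 := key7.add (key6.add key5)
    rw [sub_add_sub_cancel, sub_add_sub_cancel] at h1
    exact h1
  -- lower bound (A part)
  have hL1 : (Q - Aᴴ * Y⁻¹ * A).PosSemidef := by
    have e : Q - Aᴴ * Y⁻¹ * A = hrpow Y (s/t) + Bᴴ * hrpow Y (-(p/t)) * B := by
      rw [← hsol]; abel
    rw [e]; exact hXpsd.add hBZB
  have hAd : IsUnit A.det := (Matrix.isUnit_iff_isUnit_det A).mp hA
  have hAAinv : A * A⁻¹ = 1 := Matrix.mul_nonsing_inv A hAd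
  have hW : ((A⁻¹)ᴴ * Q * A⁻¹).PosDef :=
    Hlp.posDef_conj hQ (Matrix.isUnit_nonsing_inv_iff.mpr hA)
  have hL2 : ((A⁻¹)ᴴ * Q * A⁻¹ - Y⁻¹).PosSemidef := by
    have h2 := Hlp.psd_conj hL1 (A⁻¹)
    have e : (A⁻¹)ᴴ * (Q - Aᴴ * Y⁻¹ * A) * A⁻¹ = (A⁻¹)ᴴ * Q * A⁻¹ - Y⁻¹ := by
      rw [Matrix.mul_sub, Matrix.sub_mul]
      congr 1
      calc (A⁻¹)ᴴ * (Aᴴ * Y⁻¹ * A) * A⁻¹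
          = ((A⁻¹)ᴴ * Aᴴ) * Y⁻¹ * (A * A⁻¹) := by simp only [Matrix.mul_assoc]
        _ = Y⁻¹ := by
            rw [← Matrix.conjTranspose_mul, hAAinv, Matrix.conjTranspose_one,
              Matrix.one_mul, Matrix.mul_one]
    rwa [e] at h2
  have hL3 := Hlp.inv_antitone hY.inv hW hL2
  have hYinvinv : Y⁻¹⁻¹ = Y :=
    Matrix.nonsing_inv_nonsing_inv Y ((Matrix.isUnit_iff_isUnit_det Y).mp hY.isUnit)
  have hWinv : ((A⁻¹)ᴴ * Q * A⁻¹)⁻¹ = A * Q⁻¹ * Aᴴ := by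
    rw [Matrix.conjTranspose_nonsing_inv, Matrix.mul_inv_rev, Matrix.mul_inv_rev,
      Matrix.nonsing_inv_nonsing_inv A hAd,
      Matrix.nonsing_inv_nonsing_inv Aᴴ ((Matrix.isUnit_iff_isUnit_det Aᴴ).mp
        ((Matrix.isUnit_conjTranspose A).mpr hA)), Matrix.mul_assoc]
  have hC : (A * Q⁻¹ * Aᴴ).PosDef := by
    have h1 := Hlp.posDef_conj hQ.inv ((Matrix.isUnit_conjTranspose A).mpr hA)
    rwa [Matrix.conjTranspose_conjTranspose] at h1
  have hlow1 : (Y - lamMin (A * Q⁻¹ * Aᴴ) • (1 : Matrix (Fin n) (Fin n) ℂ)).PosSemidef := by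
    have h1 := hL3
    rw [hYinvinv, hWinv] at h1
    have h2 := h1.add (Hlp.lamMin_le hC.1)
    rwa [sub_add_sub_cancel] at h2
  -- lower bound (B part)
  have hL5 : (Q - Bᴴ * hrpow Y (-(p/t)) * B).PosSemidef := by
    have e : Q - Bᴴ * hrpow Y (-(p/t)) * B = hrpow Y (s/t) + Aᴴ * Y⁻¹ * A := by
      rw [← hsol]; abel
    rw [e]; exact hXpsd.add hAYA
  have hBd : IsUnit B.det := (Matrix.isUnit_iff_isUnit_det B).mp hB
  have hBBinv : B * B⁻¹ = 1 := Matrix.mul_nonsing_inv B hBd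
  have hW2 : ((B⁻¹)ᴴ * Q * B⁻¹).PosDef :=
    Hlp.posDef_conj hQ (Matrix.isUnit_nonsing_inv_iff.mpr hB)
  have hL6 : ((B⁻¹)ᴴ * Q * B⁻¹ - hrpow Y (-(p/t))).PosSemidef := by
    have h2 := Hlp.psd_conj hL5 (B⁻¹)
    have e : (B⁻¹)ᴴ * (Q - Bᴴ * hrpow Y (-(p/t)) * B) * B⁻¹
        = (B⁻¹)ᴴ * Q * B⁻¹ - hrpow Y (-(p/t)) := by
      rw [Matrix.mul_sub, Matrix.sub_mul]
      congr 1
      calc (B⁻¹)ᴴ * (Bᴴ * hrpow Y (-(p/t)) * B) * B⁻¹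
          = ((B⁻¹)ᴴ * Bᴴ) * hrpow Y (-(p/t)) * (B * B⁻¹) := by simp only [Matrix.mul_assoc]
        _ = hrpow Y (-(p/t)) := by
            rw [← Matrix.conjTranspose_mul, hBBinv, Matrix.conjTranspose_one,
              Matrix.one_mul, Matrix.mul_one]
    rwa [e] at h2
  have hZpd : (hrpow Y (-(p/t))).PosDef := by
    rw [hZrep]; exact Hlp.rep_posDef hY.1 fun i => Real.rpow_pos_of_pos (hy i) _
  have hL7 := Hlp.inv_antitone hZpd hW2 hL6
  have hZinv : (hrpow Y (-(p/t)))⁻¹ = Hlp.rep hY.1 (fun i => hY.1.eigenvalues i ^ (p/t)) := by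
    rw [hZrep]
    exact Hlp.rep_inv hY.1 fun i => by
      rw [← Real.rpow_add (hy i), neg_add_cancel, Real.rpow_zero]
  have hW2inv : ((B⁻¹)ᴴ * Q * B⁻¹)⁻¹ = B * Q⁻¹ * Bᴴ := by
    rw [Matrix.conjTranspose_nonsing_inv, Matrix.mul_inv_rev, Matrix.mul_inv_rev,
      Matrix.nonsing_inv_nonsing_inv B hBd,
      Matrix.nonsing_inv_nonsing_inv Bᴴ ((Matrix.isUnit_iff_isUnit_det Bᴴ).mp
        ((Matrix.isUnit_conjTranspose B).mpr hB)), Matrix.mul_assoc]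
  have hC2 : (B * Q⁻¹ * Bᴴ).PosDef := by
    have h1 := Hlp.posDef_conj hQ.inv ((Matrix.isUnit_conjTranspose B).mpr hB)
    rwa [Matrix.conjTranspose_conjTranspose] at h1
  have hyb : ∀ i, lamMin (B * Q⁻¹ * Bᴴ) ≤ hY.1.eigenvalues i ^ (p/t) := by
    apply Hlp.extract_ge hY.1
    have h1 := hL7
    rw [hZinv, hW2inv] at h1
    have h2 := h1.add (Hlp.lamMin_le hC2.1)
    rwa [sub_add_sub_cancel] at h2
  have hm0 : 0 < lamMin (B * Q⁻¹ * Bᴴ) := by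
    rw [Hlp.lamMin_eq hC2.1]
    obtain ⟨j, hj⟩ := exists_eq_ciInf_of_finite (f := hC2.1.eigenvalues)
    rw [← hj]; exact hC2.eigenvalues_pos j
  have hyτ : ∀ i, lamMin (B * Q⁻¹ * Bᴴ) ^ (t/p) ≤ hY.1.eigenvalues i := fun i => by
    have h1 := Real.rpow_le_rpow hm0.le (hyb i) (by linarith : (0:ℝ) ≤ t/p)
    rwa [← Real.rpow_mul (hy i).le, show (p/t) * (t/p) = 1 by field_simp,
      Real.rpow_one] at h1
  have hlow2 : (Y - (lamMin (B * Q⁻¹ * Bᴴ) ^ (t/p)) •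
      (1 : Matrix (Fin n) (Fin n) ℂ)).PosSemidef := by
    rw [Hlp.self_sub_smul_one hY.1]
    refine (Hlp.rep_psd_iff hY.1 _).mpr fun i => ?_
    simp only [Pi.sub_apply, Pi.smul_apply, Pi.one_apply, smul_eq_mul, mul_one]
    rw [sub_nonneg]
    exact hyτ i
  have hmM : lamMin (B * Q⁻¹ * Bᴴ) ≤ lamMax (B * Q⁻¹ * Bᴴ) := by
    rw [Hlp.lamMin_eq hC2.1, Hlp.lamMax_eq hC2.1]
    exact le_trans (ciInf_le (Set.Finite.bddBelow (Set.finite_range _)) (⟨0,hn⟩ : Fin n))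
      (le_ciSup (Set.Finite.bddAbove (Set.finite_range _)) (⟨0,hn⟩ : Fin n))
  have hb1 : (lamMin (B * Q⁻¹ * Bᴴ) / lamMax (B * Q⁻¹ * Bᴴ)) ^ (t/p - 1) *
      lamMin (B * Q⁻¹ * Bᴴ) ^ (t/p) ≤ lamMin (B * Q⁻¹ * Bᴴ) ^ (t/p) := by
    apply mul_le_of_le_one_left (Real.rpow_nonneg hm0.le _)
    exact Real.rpow_le_one (div_nonneg hm0.le (le_trans hm0.le hmM))
      ((div_le_one (lt_of_lt_of_le hm0 hmM)).mpr hmM) (by linarith)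
  constructor
  · show (Y - m₁ • (1 : Matrix (Fin n) (Fin n) ℂ)).PosSemidef
    rcases max_choice (lamMin (A * Q⁻¹ * Aᴴ))
      ((lamMin (B * Q⁻¹ * Bᴴ) / lamMax (B * Q⁻¹ * Bᴴ)) ^ (t / p - 1) *
        lamMin (B * Q⁻¹ * Bᴴ) ^ (t / p)) with hmx | hmx
    · rw [hm₁, hmx]; exact hlow1
    · rw [hm₁, hmx]
      have hds : ((lamMin (B * Q⁻¹ * Bᴴ) ^ (t/p)) • (1 : Matrix (Fin n) (Fin n) ℂ) -
          ((lamMin (B * Q⁻¹ * Bᴴ) / lamMax (B * Q⁻¹ * Bᴴ)) ^ (t / p - 1) *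
            lamMin (B * Q⁻¹ * Bᴴ) ^ (t / p)) • 1).PosSemidef := by
        rw [← sub_smul]
        exact Hlp.psd_smul Matrix.PosSemidef.one (sub_nonneg.mpr hb1)
      have h2 := hlow2.add hds
      rwa [sub_add_sub_cancel] at h2
  · show (N₁ - Y).PosSemidef
    exact hUpper
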